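/- arXiv:2603.26578 — 5 statements merged into one kernel-verified Lean document; each statement's English description precedes it below -/
import Mathlib

section
/- Let A ∈ ℝ^{N×N} be a constant matrix, let f(x)_i = Σ_j A_{ij} e_j(x_j) where each e_j : ℝ → ℝ is smooth and e_j depends only on the j-th coordinate, and let φ : ℝ^N → ℝ be smooth with compartmental support csupp(φ) = {i : ∂φ/∂x_i ≢ 0} ⊆ B. Define the influence graph G(A) on nodes {1,…,N} with edge {i,j} whenever A_{ij} ≠ 0 or A_{ji} ≠ 0. Then for every k ≥ 0, the iterated Lie derivative L_f^k φ (where L_f ψ = ∇ψ · f) has compartmental support contained in the k-hop neighborhood N^k(B) of B in G(A). -/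
/-- Iterated Lie derivative along a vector field `f` on `ℝ^N`. -/
noncomputable def lieD {N : ℕ} (f : (Fin N → ℝ) → (Fin N → ℝ))
    (φ : (Fin N → ℝ) → ℝ) : ℕ → (Fin N → ℝ) → ℝ
  | 0 => φ
  | k + 1 => fun x => fderiv ℝ (lieD f φ k) x (f x)

/-- Compartmental support: coordinates on which `ψ` actually depends. -/
def csupp {N : ℕ} (ψ : (Fin N → ℝ) → ℝ) : Set (Fin N) :=
  {i | ∃ x, fderiv ℝ ψ x (Pi.single i 1) ≠ 0}

/-- `k`-hop neighborhood of `W` under an adjacency relation. -/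
def nhopRel {N : ℕ} (Adj : Fin N → Fin N → Prop) (W : Set (Fin N)) : ℕ → Set (Fin N)
  | 0 => W
  | k + 1 => nhopRel Adj W k ∪ {j | ∃ i ∈ nhopRel Adj W k, Adj i j}

def DependsOn' {N : ℕ} (ψ : (Fin N → ℝ) → ℝ) (S : Set (Fin N)) : Prop :=
  ∀ x y : Fin N → ℝ, (∀ i ∈ S, x i = y i) → ψ x = ψ y

/-- the fderiv of a function depending on S is the same at points agreeing on S -/
lemma fderiv_eq_of_dependsOn {N : ℕ} {ψ : (Fin N → ℝ) → ℝ} {S : Set (Fin N)}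
    (hd : Differentiable ℝ ψ) (h : DependsOn' ψ S) {x y : Fin N → ℝ}
    (hxy : ∀ i ∈ S, x i = y i) : fderiv ℝ ψ x = fderiv ℝ ψ y := by
  set v := y - x with hv
  have hψv : (fun z => ψ (z + v)) = ψ := by
    funext z
    exact h _ _ (fun i hi => by simp [hv, hxy i hi])
  have h1 : HasFDerivAt (fun z => z + v) (ContinuousLinearMap.id ℝ (Fin N → ℝ)) x :=
    (hasFDerivAt_id x).add_const v
  have h2 : HasFDerivAt (fun z => ψ (z + v)) ((fderiv ℝ ψ (x + v)).comp
      (ContinuousLinearMap.id ℝ (Fin N → ℝ))) x :=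
    (hd (x + v)).hasFDerivAt.comp x h1
  have hxvy : x + v = y := by funext i; simp [hv]
  rw [hψv, hxvy] at h2
  rw [h2.fderiv]
  ext w; simp

/-- directional derivative in direction outside S vanishes -/
lemma fderiv_single_eq_zero {N : ℕ} {ψ : (Fin N → ℝ) → ℝ} {S : Set (Fin N)}
    (hd : Differentiable ℝ ψ) (h : DependsOn' ψ S) {i : Fin N} (hi : i ∉ S)
    (x : Fin N → ℝ) : fderiv ℝ ψ x (Pi.single i 1) = 0 := by
  have hc : ∀ t : ℝ, ψ (x + t • (Pi.single i 1 : Fin N → ℝ)) = ψ x := by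
    intro t
    refine h _ _ fun j hj => ?_
    have : j ≠ i := fun hji => hi (hji ▸ hj)
    simp [Pi.single_eq_of_ne this]
  have h1 : HasDerivAt (fun t : ℝ => x + t • (Pi.single i 1 : Fin N → ℝ)) (Pi.single i 1) 0 := by
    simpa using ((hasDerivAt_id (0:ℝ)).smul_const ((Pi.single i 1 : Fin N → ℝ))).const_add x
  have h2 : HasDerivAt (fun t : ℝ => ψ (x + t • (Pi.single i 1 : Fin N → ℝ)))
      (fderiv ℝ ψ (x + (0:ℝ) • (Pi.single i 1 : Fin N → ℝ)) (Pi.single i 1)) 0 :=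
    (hd _).hasFDerivAt.comp_hasDerivAt 0 h1
  have h3 : (fun t : ℝ => ψ (x + t • (Pi.single i 1 : Fin N → ℝ))) = fun _ => ψ x := funext hc
  rw [h3] at h2
  have h4 : x + (0:ℝ) • (Pi.single i 1 : Fin N → ℝ) = x := by simp
  rw [h4] at h2
  have := h2.deriv
  simp only [deriv_const] at this
  exact this.symm

/-- csupp ⊆ S implies DependsOn S, for differentiable ψ -/
lemma dependsOn_of_csupp {N : ℕ} {ψ : (Fin N → ℝ) → ℝ} {S : Set (Fin N)}
    (hd : Differentiable ℝ ψ) (h : csupp ψ ⊆ S) : DependsOn' ψ S := by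
  have hzero : ∀ i ∉ S, ∀ x, fderiv ℝ ψ x (Pi.single i 1) = 0 := by
    intro i hi x
    by_contra hne
    exact hi (h ⟨x, hne⟩)
  -- induction on the finite set of coordinates where x, y differ
  have key : ∀ (T : Finset (Fin N)), ∀ x y : Fin N → ℝ,
      (∀ i, i ∉ T → x i = y i) → (∀ i ∈ T, i ∉ S) → ψ x = ψ y := by
    intro T
    induction T using Finset.induction_on with
    | empty => intro x y hxy _; congr 1; funext i; exact hxy i (by simp)
    | @insert a T ha ih =>
      intro x y hxy hT
      set z := Function.update x a (y a) with hz
      have haS : a ∉ S := hT a (Finset.mem_insert_self a T)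
      have step : ψ x = ψ z := by
        have hdiff : ∀ t : ℝ, HasDerivAt (fun s : ℝ => ψ (Function.update x a s)) 0 t := by
          intro t
          have heq : (fun s : ℝ => Function.update x a s)
              = fun s : ℝ => x + (s - x a) • (Pi.single a 1 : Fin N → ℝ) := by
            funext s; funext j
            by_cases hj : j = a
            · subst hj; simp
            · simp [Function.update_of_ne hj, Pi.single_eq_of_ne hj]
          have h1 : HasDerivAt (fun s : ℝ => x + (s - x a) • (Pi.single a 1 : Fin N → ℝ))
              (Pi.single a 1) t := by
            simpa using (((hasDerivAt_id t).sub_const (x a)).smul_const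
              ((Pi.single a 1 : Fin N → ℝ))).const_add x
          have h2 := (hd _).hasFDerivAt.comp_hasDerivAt t (heq ▸ h1 : HasDerivAt
              (fun s : ℝ => Function.update x a s) ((Pi.single a 1 : Fin N → ℝ)) t)
          simpa [hzero a haS, Function.comp_def] using h2
        have hconst := is_const_of_deriv_eq_zero
          (fun t => (hdiff t).differentiableAt)
          (fun t => (hdiff t).deriv) (y a) (x a)
        simpa [hz] using hconst.symm
      rw [step]
      refine ih z y (fun i hi => ?_) (fun i hi => hT i (Finset.mem_insert_of_mem hi))
      by_cases hia : i = a
      · subst hia; simp [hz]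
      · rw [hz, Function.update_of_ne hia]
        exact hxy i (by simp [hia, hi])
  intro x y hxy
  refine key {i | x i ≠ y i}.toFinset x y (fun i hi => ?_) (fun i hi => ?_)
  · by_contra hne
    exact hi (by simpa using hne)
  · intro hiS
    exact (by simpa using hi : x i ≠ y i) (hxy i hiS)

/-- DependsOn implies csupp ⊆ S -/
lemma csupp_subset_of_dependsOn {N : ℕ} {ψ : (Fin N → ℝ) → ℝ} {S : Set (Fin N)}
    (hd : Differentiable ℝ ψ) (h : DependsOn' ψ S) : csupp ψ ⊆ S := by
  intro i hi
  by_contra hiS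
  obtain ⟨x, hx⟩ := hi
  exact hx (fderiv_single_eq_zero hd h hiS x)

theorem stmt1 (N : ℕ) (A : Matrix (Fin N) (Fin N) ℝ) (e : Fin N → ℝ → ℝ)
    (he : ∀ j, ContDiff ℝ (⊤ : ℕ∞) (e j))
    (φ : (Fin N → ℝ) → ℝ) (hφ : ContDiff ℝ (⊤ : ℕ∞) φ)
    (B : Set (Fin N)) (hB : csupp φ ⊆ B) :
    ∀ k : ℕ,
      csupp (lieD (fun x i => ∑ j, A i j * e j (x j)) φ k) ⊆
        nhopRel (fun i j => A i j ≠ 0 ∨ A j i ≠ 0) B k := by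
  set f : (Fin N → ℝ) → (Fin N → ℝ) := fun x i => ∑ j, A i j * e j (x j) with hf
  set Adj : Fin N → Fin N → Prop := fun i j => A i j ≠ 0 ∨ A j i ≠ 0 with hAdj
  have hfc : ContDiff ℝ (⊤ : ℕ∞) f := by
    rw [contDiff_pi]
    intro i
    exact ContDiff.sum fun j _ =>
      (contDiff_const.mul ((he j).comp (contDiff_apply ℝ ℝ j)))
  have main : ∀ k, ContDiff ℝ (⊤ : ℕ∞) (lieD f φ k) ∧
      DependsOn' (lieD f φ k) (nhopRel Adj B k) := by
    intro k
    induction k with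
    | zero =>
      exact ⟨hφ, dependsOn_of_csupp (hφ.differentiable (by simp)) hB⟩
    | succ k ih =>
      obtain ⟨hck, hdk⟩ := ih
      have hck' : ContDiff ℝ (⊤ : ℕ∞) (lieD f φ (k + 1)) := by
        show ContDiff ℝ (⊤ : ℕ∞) fun x => fderiv ℝ (lieD f φ k) x (f x)
        exact (hck.fderiv_right (by simp)).clm_apply hfc
      refine ⟨hck', ?_⟩
      intro x y hxy
      have hdiff : Differentiable ℝ (lieD f φ k) := hck.differentiable (by simp)
      have hS : ∀ i ∈ nhopRel Adj B k, x i = y i := fun i hi =>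
        hxy i (Set.mem_union_left _ hi)
      have hD : fderiv ℝ (lieD f φ k) x = fderiv ℝ (lieD f φ k) y :=
        fderiv_eq_of_dependsOn hdiff hdk hS
      show fderiv ℝ (lieD f φ k) x (f x) = fderiv ℝ (lieD f φ k) y (f y)
      rw [← hD]
      set L := fderiv ℝ (lieD f φ k) x with hL
      have expand : ∀ v : Fin N → ℝ, L v = ∑ i, v i * L (Pi.single i 1) := by
        intro v
        conv_lhs => rw [pi_eq_sum_univ v]
        rw [map_sum]
        refine Finset.sum_congr rfl fun i _ => ?_
        rw [ContinuousLinearMap.map_smul, smul_eq_mul]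
        congr 2
        funext j
        simp [Pi.single_apply, eq_comm]
      rw [expand (f x), expand (f y)]
      refine Finset.sum_congr rfl fun i _ => ?_
      by_cases hiS : i ∈ nhopRel Adj B k
      · congr 1
        show (∑ j, A i j * e j (x j)) = ∑ j, A i j * e j (y j)
        refine Finset.sum_congr rfl fun j _ => ?_
        by_cases hA : A i j = 0
        · simp [hA]
        · have hjS : j ∈ nhopRel Adj B (k + 1) :=
            Set.mem_union_right _ ⟨i, hiS, Or.inl hA⟩
          rw [hxy j hjS]
      · rw [hL, fderiv_single_eq_zero hdiff hdk hiS x]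
        ring
  intro k
  exact csupp_subset_of_dependsOn ((main k).1.differentiable (by simp)) (main k).2
end

section
/- With f as above (f(x)_i = Σ_j A_{ij} e_j(x_j), A constant), a constant input matrix G ∈ ℝ^{N×m}, port node set P = {i : row i of G is nonzero}, and barrier node set B = csupp(φ), let d be the shortest-path distance in the influence graph from B to P. Then for all k < d, L_G L_f^k φ ≡ 0 on ℝ^N, where L_G ψ(x) = ∇ψ(x)ᵀ G. In particular the relative degree of φ with respect to the control-affine system ẋ = f(x) + G u is at least d + 1 at every point. -/
/-- `ψ` depends only on coordinates in `W`. -/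
def Dep {N : ℕ} (W : Set (Fin N)) (ψ : (Fin N → ℝ) → ℝ) : Prop :=
  ∀ x y, (∀ i ∈ W, x i = y i) → ψ x = ψ y

lemma hasDerivAt_line {N : ℕ} {ψ : (Fin N → ℝ) → ℝ} (hψ : Differentiable ℝ ψ)
    (x v : Fin N → ℝ) (t : ℝ) :
    HasDerivAt (fun t : ℝ => ψ (x + t • v)) (fderiv ℝ ψ (x + t • v) v) t := by
  have hline : HasDerivAt (fun t : ℝ => x + t • v) v t := by
    simpa using ((hasDerivAt_id t).smul_const v).const_add x
  exact (hψ (x + t • v)).hasFDerivAt.comp_hasDerivAt t hline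

lemma fderiv_eq_zero_of_dep {N : ℕ} {W : Set (Fin N)} {ψ : (Fin N → ℝ) → ℝ}
    (hψ : Differentiable ℝ ψ) (hdep : Dep W ψ)
    (x v : Fin N → ℝ) (hv : ∀ i ∈ W, v i = 0) : fderiv ℝ ψ x v = 0 := by
  have h1 : HasDerivAt (fun t : ℝ => ψ (x + t • v)) (fderiv ℝ ψ x v) 0 := by
    simpa using hasDerivAt_line hψ x v 0
  have h2 : (fun t : ℝ => ψ (x + t • v)) = fun _ => ψ x := by
    funext t
    exact hdep _ _ (fun i hi => by simp [hv i hi])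
  rw [h2] at h1
  simpa using h1.unique (hasDerivAt_const 0 (ψ x))

lemma fderiv_congr_dep {N : ℕ} {W : Set (Fin N)} {ψ : (Fin N → ℝ) → ℝ}
    (hψ : Differentiable ℝ ψ) (hdep : Dep W ψ)
    (x y v : Fin N → ℝ) (hxy : ∀ i ∈ W, x i = y i) :
    fderiv ℝ ψ x v = fderiv ℝ ψ y v := by
  have h1 : HasDerivAt (fun t : ℝ => ψ (x + t • v)) (fderiv ℝ ψ x v) 0 := by
    simpa using hasDerivAt_line hψ x v 0
  have h2 : HasDerivAt (fun t : ℝ => ψ (y + t • v)) (fderiv ℝ ψ y v) 0 := by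
    simpa using hasDerivAt_line hψ y v 0
  have heq : (fun t : ℝ => ψ (x + t • v)) = fun t : ℝ => ψ (y + t • v) := by
    funext t
    exact hdep _ _ (fun i hi => by simp [hxy i hi])
  rw [heq] at h1
  exact h1.unique h2

lemma dep_csupp {N : ℕ} {φ : (Fin N → ℝ) → ℝ} (hφ : Differentiable ℝ φ) :
    Dep (csupp φ) φ := by
  intro x y hxy
  have key : ∀ (w : Fin N → ℝ) (a : Fin N), a ∉ csupp φ → ∀ t,
      φ (Function.update w a t) = φ w := by
    intro w a ha t
    have hzero : ∀ z : Fin N → ℝ, fderiv ℝ φ z (Pi.single a 1) = 0 := by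
      intro z
      by_contra h
      exact ha ⟨z, h⟩
    have hc : ∀ s : ℝ, HasDerivAt (fun s : ℝ => φ (Function.update w a s)) 0 s := by
      intro s
      have hupd : (fun s : ℝ => Function.update w a s)
          = fun s : ℝ => w + (s - w a) • (Pi.single a 1 : Fin N → ℝ) := by
        funext s i
        by_cases h : i = a
        · subst h; simp
        · simp [Function.update_apply, h, Pi.single_apply]
      have hline : HasDerivAt (fun s : ℝ => Function.update w a s)
          (Pi.single a (1:ℝ)) s := by
        rw [hupd]
        simpa using (((hasDerivAt_id s).sub_const (w a)).smul_const
          (Pi.single a 1 : Fin N → ℝ)).const_add w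
      have := (hφ _).hasFDerivAt.comp_hasDerivAt s hline
      rwa [hzero] at this
    have hdiff : Differentiable ℝ (fun s : ℝ => φ (Function.update w a s)) :=
      fun s => (hc s).differentiableAt
    have hderiv : ∀ s : ℝ, deriv (fun s : ℝ => φ (Function.update w a s)) s = 0 :=
      fun s => (hc s).deriv
    have := is_const_of_deriv_eq_zero hdiff hderiv t (w a)
    simpa using this
  have main : ∀ T : Finset (Fin N),
      φ (fun i => if i ∈ T then y i else x i) = φ x := by
    intro T
    induction T using Finset.induction_on with
    | empty => simp
    | @insert a T ha ih =>
      have hz : (fun i => if i ∈ insert a T then y i else x i)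
          = Function.update (fun i => if i ∈ T then y i else x i) a (y a) := by
        funext i
        by_cases h : i = a
        · subst h; simp [ha]
        · simp [Function.update_apply, h]
      rw [hz]
      by_cases hmem : a ∈ csupp φ
      · have hxa : (fun i => if i ∈ T then y i else x i) a = y a := by
          simp [ha, (hxy a hmem).symm]
        rw [← hxa, Function.update_eq_self, ih]
      · rw [key _ a hmem, ih]
  have := main Finset.univ
  simpa using this.symm

lemma dep_step {N : ℕ} (A : Matrix (Fin N) (Fin N) ℝ) (e : Fin N → ℝ → ℝ)
    {W W' : Set (Fin N)} {ψ : (Fin N → ℝ) → ℝ}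
    (hψ : Differentiable ℝ ψ) (hdep : Dep W ψ)
    (hWW' : W ⊆ W') (hA : ∀ j ∈ W, ∀ l, l ∉ W' → A j l = 0) :
    Dep W' (fun x => fderiv ℝ ψ x (fun i => ∑ j, A i j * e j (x j))) := by
  intro x y hxy
  set f : (Fin N → ℝ) → (Fin N → ℝ) := fun x i => ∑ j, A i j * e j (x j) with hf
  have h1 : fderiv ℝ ψ x (f x) = fderiv ℝ ψ y (f x) :=
    fderiv_congr_dep hψ hdep x y (f x) (fun i hi => hxy i (hWW' hi))
  have h2 : fderiv ℝ ψ y (f x) = fderiv ℝ ψ y (f y) := by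
    have hz : fderiv ℝ ψ y (f x - f y) = 0 := by
      apply fderiv_eq_zero_of_dep hψ hdep
      intro j hj
      have hfeq : f x j = f y j := by
        apply Finset.sum_congr rfl
        intro l _
        by_cases hl : l ∈ W'
        · rw [hxy l hl]
        · rw [hA j hj l hl]; ring
      simp [Pi.sub_apply, hfeq]
    rw [map_sub] at hz
    linarith
  simp only [hf] at h1 h2 ⊢
  rw [h1, h2]

lemma lieD_smooth_dep {N : ℕ} (A : Matrix (Fin N) (Fin N) ℝ)
    (e : Fin N → ℝ → ℝ) (he : ∀ j, ContDiff ℝ (⊤ : ℕ∞) (e j))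
    (φ : (Fin N → ℝ) → ℝ) (hφ : ContDiff ℝ (⊤ : ℕ∞) φ) (k : ℕ) :
    ContDiff ℝ (⊤ : ℕ∞) (lieD (fun x i => ∑ j, A i j * e j (x j)) φ k) ∧
    Dep (nhopRel (fun i j => A i j ≠ 0 ∨ A j i ≠ 0) (csupp φ) k)
      (lieD (fun x i => ∑ j, A i j * e j (x j)) φ k) := by
  have hf : ContDiff ℝ (⊤ : ℕ∞) (fun x : Fin N → ℝ => fun i => ∑ j, A i j * e j (x j)) := by
    apply contDiff_pi.2
    intro i
    apply ContDiff.sum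
    intro j _
    exact contDiff_const.mul ((he j).comp (contDiff_apply ℝ ℝ j))
  induction k with
  | zero => exact ⟨hφ, dep_csupp (hφ.differentiable (by simp))⟩
  | succ k ih =>
    obtain ⟨hsm, hdep⟩ := ih
    constructor
    · exact ContDiff.clm_apply (hsm.fderiv_right (by simp)) hf
    · have := dep_step (W' := nhopRel (fun i j => A i j ≠ 0 ∨ A j i ≠ 0) (csupp φ) (k+1))
        A e (hsm.differentiable (by simp)) hdep
        (by simp only [nhopRel]; exact Set.subset_union_left)
        (by
          intro j hj l hl
          by_contra hne
          exact hl (Set.mem_union_right _ ⟨j, hj, Or.inl hne⟩))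
      exact this

theorem stmt2 (N m : ℕ) (A : Matrix (Fin N) (Fin N) ℝ)
    (G : Matrix (Fin N) (Fin m) ℝ)
    (e : Fin N → ℝ → ℝ) (he : ∀ j, ContDiff ℝ (⊤ : ℕ∞) (e j))
    (φ : (Fin N → ℝ) → ℝ) (hφ : ContDiff ℝ (⊤ : ℕ∞) φ)
    (P : Set (Fin N)) (hP : P = {i | ∃ c, G i c ≠ 0})
    (d : ℕ)
    (hd : d = sInf {k | ((nhopRel (fun i j => A i j ≠ 0 ∨ A j i ≠ 0) (csupp φ) k)
      ∩ P).Nonempty}) :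
    (∀ k < d, ∀ x : Fin N → ℝ, ∀ c : Fin m,
      fderiv ℝ (lieD (fun x i => ∑ j, A i j * e j (x j)) φ k) x (fun i => G i c) = 0) ∧
    (∀ (x₀ : Fin N → ℝ) (r : ℕ), 1 ≤ r →
      (∃ c : Fin m,
        fderiv ℝ (lieD (fun x i => ∑ j, A i j * e j (x j)) φ (r - 1)) x₀
          (fun i => G i c) ≠ 0) →
      d + 1 ≤ r) := by
  have part1 : ∀ k < d, ∀ x : Fin N → ℝ, ∀ c : Fin m,
      fderiv ℝ (lieD (fun x i => ∑ j, A i j * e j (x j)) φ k) x (fun i => G i c) = 0 := by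
    intro k hk x c
    obtain ⟨hsm, hdep⟩ := lieD_smooth_dep A e he φ hφ k
    apply fderiv_eq_zero_of_dep (hsm.differentiable (by simp)) hdep
    intro i hi
    have hnot : k ∉ {k | ((nhopRel (fun i j => A i j ≠ 0 ∨ A j i ≠ 0) (csupp φ) k)
        ∩ P).Nonempty} := Nat.notMem_of_lt_sInf (hd ▸ hk)
    have hiP : i ∉ P := fun hiP => hnot ⟨i, hi, hiP⟩
    rw [hP] at hiP
    by_contra h
    exact hiP ⟨c, h⟩
  refine ⟨part1, ?_⟩
  intro x₀ r hr ⟨c, hc⟩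
  by_contra hlt
  push_neg at hlt
  exact hc (part1 (r - 1) (by omega) x₀ c)
end

section
/- Let f(x)_i = Σ_j A_{ij}(x) e_j(x_j) with the structural locality property that ∂A_{ij}/∂x_k ≡ 0 for k ∉ {i,j}, let G(x) have block rows G_i with ∂G_i/∂x_k ≡ 0 for k ∉ {i}, and let C = ∪_{k≥0} N^k(B) be the set of nodes reachable from B = csupp(φ) in the influence graph. If C ∩ P = ∅ (no path exists from B to any port node), then L_G L_f^k φ ≡ 0 for all k ≥ 0, i.e., φ has infinite relative degree everywhere. -/
/-- `ψ` depends only on the coordinates in `S`. -/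
def DependsOnC {N : ℕ} (S : Set (Fin N)) (ψ : (Fin N → ℝ) → ℝ) : Prop :=
  ∀ x y : Fin N → ℝ, (∀ i ∈ S, x i = y i) → ψ x = ψ y

lemma fderiv_eq_sum {N : ℕ} (ψ : (Fin N → ℝ) → ℝ) (x v : Fin N → ℝ) :
    fderiv ℝ ψ x v = ∑ i, v i * fderiv ℝ ψ x (Pi.single i 1) := by
  have hv : v = ∑ i, v i • (Pi.single i (1:ℝ) : Fin N → ℝ) := by
    funext j
    simp [Finset.sum_apply, Pi.single_apply]
  conv_lhs => rw [hv]
  rw [map_sum]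
  simp [smul_eq_mul]

lemma dependsOn_of_partials {N : ℕ} {S : Set (Fin N)} {ψ : (Fin N → ℝ) → ℝ}
    (hψ : Differentiable ℝ ψ)
    (h : ∀ i ∉ S, ∀ x, fderiv ℝ ψ x (Pi.single i 1) = 0) : DependsOnC S ψ := by
  intro x y hxy
  have key : ∀ t : ℝ, HasDerivAt (fun t : ℝ => ψ (x + t • (y - x))) 0 t := by
    intro t
    have h1 := hasDerivAt_line hψ x (y - x) t
    have h2 : fderiv ℝ ψ (x + t • (y - x)) (y - x) = 0 := by
      rw [fderiv_eq_sum]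
      apply Finset.sum_eq_zero
      intro i _
      by_cases hi : i ∈ S
      · simp [Pi.sub_apply, hxy i hi]
      · simp [h i hi]
    rwa [h2] at h1
  have hconst : (fun t : ℝ => ψ (x + t • (y - x))) 1
      = (fun t : ℝ => ψ (x + t • (y - x))) 0 :=
    is_const_of_deriv_eq_zero (fun t => (key t).differentiableAt)
      (fun t => (key t).deriv) 1 0
  simpa using hconst.symm

lemma partial_eq_zero_of_dependsOn {N : ℕ} {S : Set (Fin N)} {ψ : (Fin N → ℝ) → ℝ}
    (hψ : Differentiable ℝ ψ) (hd : DependsOnC S ψ) {i : Fin N} (hi : i ∉ S)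
    (x : Fin N → ℝ) : fderiv ℝ ψ x (Pi.single i 1) = 0 := by
  have h1 := hasDerivAt_line hψ x ((Pi.single i 1 : Fin N → ℝ)) 0
  have h2 : (fun t : ℝ => ψ (x + t • (Pi.single i 1 : Fin N → ℝ))) = fun _ => ψ x := by
    funext t
    refine hd _ _ fun s hs => ?_
    have hsi : s ≠ i := fun h => hi (h ▸ hs)
    simp [Pi.single_apply, hsi]
  rw [h2] at h1
  simpa using (hasDerivAt_const (0:ℝ) (ψ x)).unique h1 |>.symm

lemma fderiv_dependsOn {N : ℕ} {S : Set (Fin N)} {ψ : (Fin N → ℝ) → ℝ}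
    (hψ : Differentiable ℝ ψ) (hd : DependsOnC S ψ) (v : Fin N → ℝ) :
    DependsOnC S (fun x => fderiv ℝ ψ x v) := by
  intro x y hxy
  have hg : (fun t : ℝ => ψ (x + t • v)) = fun t : ℝ => ψ (y + t • v) := by
    funext t
    exact hd _ _ fun s hs => by simp [hxy s hs]
  have h1 := hasDerivAt_line hψ x v 0
  have h2 := hasDerivAt_line hψ y v 0
  rw [hg] at h1
  have := h1.unique h2
  simpa using this

theorem stmt4 (N m : ℕ) (A : (Fin N → ℝ) → Matrix (Fin N) (Fin N) ℝ)
    (G : (Fin N → ℝ) → Matrix (Fin N) (Fin m) ℝ)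
    (e : Fin N → ℝ → ℝ) (he : ∀ j, ContDiff ℝ (⊤ : ℕ∞) (e j))
    (hA : ∀ i j, ContDiff ℝ (⊤ : ℕ∞) (fun x => A x i j))
    (hG : ∀ i c, ContDiff ℝ (⊤ : ℕ∞) (fun x => G x i c))
    (hAloc : ∀ i j k, k ≠ i → k ≠ j →
      ∀ x, fderiv ℝ (fun y => A y i j) x (Pi.single k 1) = 0)
    (hGloc : ∀ i c k, k ≠ i →
      ∀ x, fderiv ℝ (fun y => G y i c) x (Pi.single k 1) = 0)
    (φ : (Fin N → ℝ) → ℝ) (hφ : ContDiff ℝ (⊤ : ℕ∞) φ)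
    (P : Set (Fin N)) (hP : P = {i | ∃ c x, G x i c ≠ 0})
    (hCP : (⋃ k : ℕ,
        nhopRel (fun i j => (∃ x, A x i j ≠ 0) ∨ (∃ x, A x j i ≠ 0)) (csupp φ) k)
      ∩ P = ∅) :
    ∀ (k : ℕ) (x : Fin N → ℝ) (c : Fin m),
      fderiv ℝ (lieD (fun x i => ∑ j, A x i j * e j (x j)) φ k) x
        (fun i => G x i c) = 0 := by
  set f : (Fin N → ℝ) → (Fin N → ℝ) := fun x i => ∑ j, A x i j * e j (x j) with hf_def
  set Adj : Fin N → Fin N → Prop :=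
    fun i j => (∃ x, A x i j ≠ 0) ∨ (∃ x, A x j i ≠ 0) with hAdj_def
  have hfs : ContDiff ℝ (⊤ : ℕ∞) f := by
    rw [hf_def]
    refine contDiff_pi.2 fun i => ?_
    refine ContDiff.sum fun j _ => (hA i j).mul ?_
    exact (he j).comp (contDiff_pi.1 contDiff_id j)
  have main : ∀ k : ℕ, ContDiff ℝ (⊤ : ℕ∞) (lieD f φ k) ∧
      DependsOnC (nhopRel Adj (csupp φ) k) (lieD f φ k) := by
    intro k
    induction k with
    | zero =>
      refine ⟨hφ, ?_⟩
      refine dependsOn_of_partials (hφ.differentiable (by simp)) ?_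
      intro i hi x
      by_contra h
      exact hi ⟨x, h⟩
    | succ k ih =>
      obtain ⟨hsm, hdep⟩ := ih
      have hdiff := hsm.differentiable (by simp)
      constructor
      · show ContDiff ℝ (⊤ : ℕ∞) fun x => fderiv ℝ (lieD f φ k) x (f x)
        exact (hsm.fderiv_right (by simp)).clm_apply hfs
      · intro x y hxy
        have hxyS : ∀ i ∈ nhopRel Adj (csupp φ) k, x i = y i := fun i hi =>
          hxy i (Set.mem_union_left _ hi)
        show fderiv ℝ (lieD f φ k) x (f x) = fderiv ℝ (lieD f φ k) y (f y)
        rw [fderiv_eq_sum, fderiv_eq_sum]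
        refine Finset.sum_congr rfl fun i _ => ?_
        by_cases hiS : i ∈ nhopRel Adj (csupp φ) k
        · have hpart : fderiv ℝ (lieD f φ k) x (Pi.single i 1)
              = fderiv ℝ (lieD f φ k) y (Pi.single i 1) :=
            fderiv_dependsOn hdiff hdep _ x y hxyS
          have hiC : i ∈ nhopRel Adj (csupp φ) (k+1) := Set.mem_union_left _ hiS
          have hfxy : f x i = f y i := by
            rw [hf_def]
            refine Finset.sum_congr rfl fun j _ => ?_
            by_cases hAij : ∀ z, A z i j = 0
            · rw [hAij x, hAij y, zero_mul, zero_mul]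
            · push_neg at hAij
              have hjC : j ∈ nhopRel Adj (csupp φ) (k+1) :=
                Set.mem_union_right _ ⟨i, hiS, Or.inl hAij⟩
              have hdA : DependsOnC {i, j} (fun z => A z i j) := by
                refine dependsOn_of_partials ((hA i j).differentiable (by simp)) ?_
                intro kk hkk z
                simp only [Set.mem_insert_iff, Set.mem_singleton_iff, not_or] at hkk
                exact hAloc i j kk hkk.1 hkk.2 z
              have hAeq : A x i j = A y i j := by
                refine hdA x y fun s hs => ?_
                simp only [Set.mem_insert_iff, Set.mem_singleton_iff] at hs
                rcases hs with rfl | rfl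
                · exact hxy s hiC
                · exact hxy s hjC
              rw [hAeq, hxy j hjC]
          rw [hfxy, hpart]
        · rw [partial_eq_zero_of_dependsOn hdiff hdep hiS,
              partial_eq_zero_of_dependsOn hdiff hdep hiS, mul_zero, mul_zero]
  intro k x c
  obtain ⟨hsm, hdep⟩ := main k
  rw [fderiv_eq_sum]
  apply Finset.sum_eq_zero
  intro i _
  by_cases hiC : i ∈ nhopRel Adj (csupp φ) k
  · have hiP : i ∉ P := by
      intro hip
      have hmem : i ∈ (⋃ k, nhopRel Adj (csupp φ) k) ∩ P :=
        ⟨Set.mem_iUnion.2 ⟨k, hiC⟩, hip⟩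
      rw [hCP] at hmem
      exact hmem
    have hGz : G x i c = 0 := by
      by_contra h
      exact hiP (hP ▸ ⟨c, x, h⟩)
    rw [hGz, zero_mul]
  · rw [partial_eq_zero_of_dependsOn (hsm.differentiable (by simp)) hdep hiC, mul_zero]
end

section
/- Under the hypotheses of the previous statement (no path from B to P, so C ∩ P = ∅), the structural obstruction is invariant under smooth static feedback: for any smooth κ : D → ℝ^m and modified drift f̃ = f + G κ, one has L_{f̃}^k φ = L_f^k φ for all k ≥ 0, and consequently L_G L_{f̃}^k φ ≡ 0 for all k ≥ 0. -/
namespace Stmt5Aux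

variable {N : ℕ}

/-- `ψ` depends only on the coordinates in `C`. -/
def IsLocal (C : Set (Fin N)) (ψ : (Fin N → ℝ) → ℝ) : Prop :=
  ∀ x y : Fin N → ℝ, (∀ i ∈ C, x i = y i) → ψ x = ψ y

lemma hasDerivAt_line (ψ : (Fin N → ℝ) → ℝ) (hψ : Differentiable ℝ ψ)
    (x v : Fin N → ℝ) (t : ℝ) :
    HasDerivAt (fun t : ℝ => ψ (x + t • v)) (fderiv ℝ ψ (x + t • v) v) t := by
  have h1 : HasDerivAt (fun t : ℝ => x + t • v) v t := by
    simpa using ((hasDerivAt_id t).smul_const v).const_add x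
  have h2 := (hψ (x + t • v)).hasFDerivAt
  exact h2.comp_hasDerivAt t h1

lemma local_of_partials (S : Set (Fin N)) (h : (Fin N → ℝ) → ℝ)
    (hd : Differentiable ℝ h)
    (hp : ∀ k ∉ S, ∀ x, fderiv ℝ h x (Pi.single k 1) = 0) :
    IsLocal S h := by
  classical
  intro x y hxy
  have key : ∀ z, fderiv ℝ h z (y - x) = 0 := by
    intro z
    have hv : (y - x) = ∑ k, Pi.single k ((y - x) k) :=
      (Finset.univ_sum_single (y - x)).symm
    rw [hv, map_sum]
    refine Finset.sum_eq_zero fun k _ => ?_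
    by_cases hk : k ∈ S
    · have : (y - x) k = 0 := by simp [hxy k hk]
      simp [this]
    · have : Pi.single k ((y - x) k) = ((y - x) k) • (Pi.single k 1 : Fin N → ℝ) := by
        funext l; by_cases h : l = k <;> simp [Pi.single_apply, h]
      rw [this, map_smul, hp k hk z, smul_zero]
  have hg : ∀ t : ℝ, HasDerivAt (fun t : ℝ => h (x + t • (y - x))) 0 t := by
    intro t
    have := hasDerivAt_line h hd x (y - x) t
    rwa [key] at this
  have hconst := is_const_of_deriv_eq_zero (fun t => (hg t).differentiableAt)
    (fun t => (hg t).deriv) 0 1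
  simpa using hconst

lemma fderiv_zero_of_local (C : Set (Fin N)) (ψ : (Fin N → ℝ) → ℝ)
    (hd : Differentiable ℝ ψ) (hl : IsLocal C ψ) (x v : Fin N → ℝ)
    (hv : ∀ i ∈ C, v i = 0) : fderiv ℝ ψ x v = 0 := by
  have hgc : (fun t : ℝ => ψ (x + t • v)) = fun _ => ψ x := by
    funext t
    exact hl _ _ fun i hi => by simp [hv i hi]
  have h1 := hasDerivAt_line ψ hd x v 0
  rw [hgc] at h1
  have h2 : HasDerivAt (fun _ : ℝ => ψ x) 0 0 := hasDerivAt_const 0 (ψ x)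
  have := h1.unique h2
  simpa using this

lemma fderiv_congr_of_local (C : Set (Fin N)) (ψ : (Fin N → ℝ) → ℝ)
    (hd : Differentiable ℝ ψ) (hl : IsLocal C ψ) (x y : Fin N → ℝ)
    (hxy : ∀ i ∈ C, x i = y i) (v : Fin N → ℝ) :
    fderiv ℝ ψ x v = fderiv ℝ ψ y v := by
  have hgc : (fun t : ℝ => ψ (x + t • v)) = fun t : ℝ => ψ (y + t • v) := by
    funext t
    exact hl _ _ fun i hi => by simp [hxy i hi]
  have h1 := hasDerivAt_line ψ hd x v 0
  have h2 := hasDerivAt_line ψ hd y v 0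
  rw [hgc] at h1
  have := h1.unique h2
  simpa using this

end Stmt5Aux

open Stmt5Aux in
theorem stmt5 (N m : ℕ) (A : (Fin N → ℝ) → Matrix (Fin N) (Fin N) ℝ)
    (G : (Fin N → ℝ) → Matrix (Fin N) (Fin m) ℝ)
    (e : Fin N → ℝ → ℝ) (he : ∀ j, ContDiff ℝ (⊤ : ℕ∞) (e j))
    (hA : ∀ i j, ContDiff ℝ (⊤ : ℕ∞) (fun x => A x i j))
    (hG : ∀ i c, ContDiff ℝ (⊤ : ℕ∞) (fun x => G x i c))
    (hAloc : ∀ i j k, k ≠ i → k ≠ j →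
      ∀ x, fderiv ℝ (fun y => A y i j) x (Pi.single k 1) = 0)
    (hGloc : ∀ i c k, k ≠ i →
      ∀ x, fderiv ℝ (fun y => G y i c) x (Pi.single k 1) = 0)
    (φ : (Fin N → ℝ) → ℝ) (hφ : ContDiff ℝ (⊤ : ℕ∞) φ)
    (P : Set (Fin N)) (hP : P = {i | ∃ c x, G x i c ≠ 0})
    (hCP : (⋃ k : ℕ,
        nhopRel (fun i j => (∃ x, A x i j ≠ 0) ∨ (∃ x, A x j i ≠ 0)) (csupp φ) k)
      ∩ P = ∅)
    (κ : (Fin N → ℝ) → Fin m → ℝ) (hκ : ∀ c, ContDiff ℝ (⊤ : ℕ∞) (fun x => κ x c)) :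
    (∀ k : ℕ,
      lieD (fun x i => (∑ j, A x i j * e j (x j)) + ∑ c, G x i c * κ x c) φ k =
        lieD (fun x i => ∑ j, A x i j * e j (x j)) φ k) ∧
    (∀ (k : ℕ) (x : Fin N → ℝ) (c : Fin m),
      fderiv ℝ
        (lieD (fun x i => (∑ j, A x i j * e j (x j)) + ∑ c, G x i c * κ x c) φ k) x
        (fun i => G x i c) = 0) := by
  classical
  set Adj : Fin N → Fin N → Prop :=
    fun i j => (∃ x, A x i j ≠ 0) ∨ (∃ x, A x j i ≠ 0) with hAdj
  set C : Set (Fin N) := ⋃ k : ℕ, nhopRel Adj (csupp φ) k with hC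
  set f : (Fin N → ℝ) → (Fin N → ℝ) :=
    fun x i => ∑ j, A x i j * e j (x j) with hf
  -- C is closed under Adj
  have hCclosed : ∀ i ∈ C, ∀ j, Adj i j → j ∈ C := by
    intro i hi j hij
    rw [hC, Set.mem_iUnion] at hi ⊢
    obtain ⟨k, hk⟩ := hi
    exact ⟨k + 1, Or.inr ⟨i, hk, hij⟩⟩
  have hCsupp : csupp φ ⊆ C := by
    intro i hi
    rw [hC, Set.mem_iUnion]
    exact ⟨0, hi⟩
  -- G vanishes on rows in C
  have hGzero : ∀ i ∈ C, ∀ x c, G x i c = 0 := by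
    intro i hi x c
    by_contra hne
    have hiP : i ∈ P := by rw [hP]; exact ⟨c, x, hne⟩
    have : i ∈ (C ∩ P : Set (Fin N)) := ⟨hi, hiP⟩
    rw [hCP] at this
    exact this
  -- A i j vanishes if i ∈ C and j ∉ C
  have hAzero : ∀ i ∈ C, ∀ j, j ∉ C → ∀ x, A x i j = 0 := by
    intro i hi j hj x
    by_contra hne
    exact hj (hCclosed i hi j (Or.inl ⟨x, hne⟩))
  -- A i j depends only on coordinates i, j
  have hAlocal : ∀ i j, ∀ x y : Fin N → ℝ, x i = y i → x j = y j →
      A x i j = A y i j := by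
    intro i j x y hxi hxj
    refine local_of_partials ({i, j} : Set (Fin N)) (fun y => A y i j)
      ((hA i j).differentiable (by simp)) ?_ x y ?_
    · intro k hk z
      exact hAloc i j k (fun h => hk (by simp [h])) (fun h => hk (by simp [h])) z
    · intro l hl
      rcases hl with hl | hl
      · subst hl; exact hxi
      · simp only [Set.mem_singleton_iff] at hl; subst hl; exact hxj
  -- f is smooth
  have hfC : ContDiff ℝ (⊤ : ℕ∞) f := by
    rw [hf]
    apply contDiff_pi.2
    intro i
    exact ContDiff.sum fun j _ =>
      (hA i j).mul ((he j).comp (contDiff_apply ℝ ℝ j))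
  -- f i is C-local for i ∈ C
  have hflocal : ∀ i ∈ C, ∀ x y : Fin N → ℝ, (∀ l ∈ C, x l = y l) →
      f x i = f y i := by
    intro i hi x y hxy
    rw [hf]
    refine Finset.sum_congr rfl fun j _ => ?_
    by_cases hj : j ∈ C
    · rw [hAlocal i j x y (hxy i hi) (hxy j hj), hxy j hj]
    · rw [hAzero i hi j hj x, hAzero i hi j hj y, zero_mul, zero_mul]
  -- Main induction
  have main : ∀ k, ContDiff ℝ (⊤ : ℕ∞) (lieD f φ k) ∧ IsLocal C (lieD f φ k) := by
    intro k
    induction k with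
    | zero =>
      refine ⟨hφ, local_of_partials C φ (hφ.differentiable (by simp)) ?_⟩
      intro k hk x
      by_contra hne
      exact hk (hCsupp ⟨x, hne⟩)
    | succ k ih =>
      obtain ⟨ihs, ihl⟩ := ih
      have hd : Differentiable ℝ (lieD f φ k) := ihs.differentiable (by simp)
      constructor
      · show ContDiff ℝ (⊤ : ℕ∞) fun x => fderiv ℝ (lieD f φ k) x (f x)
        exact (ihs.fderiv_right (by simp)).clm_apply hfC
      · intro x y hxy
        show fderiv ℝ (lieD f φ k) x (f x) = fderiv ℝ (lieD f φ k) y (f y)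
        have hx : f x = ∑ i, Pi.single i (f x i) := (Finset.univ_sum_single (f x)).symm
        have hy : f y = ∑ i, Pi.single i (f y i) := (Finset.univ_sum_single (f y)).symm
        rw [hx, hy, map_sum, map_sum]
        refine Finset.sum_congr rfl fun i _ => ?_
        have hsx : Pi.single i (f x i) = (f x i) • (Pi.single i 1 : Fin N → ℝ) := by
          funext l; by_cases h : l = i <;> simp [Pi.single_apply, h]
        have hsy : Pi.single i (f y i) = (f y i) • (Pi.single i 1 : Fin N → ℝ) := by
          funext l; by_cases h : l = i <;> simp [Pi.single_apply, h]
        rw [hsx, hsy, map_smul, map_smul]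
        by_cases hi : i ∈ C
        · rw [hflocal i hi x y hxy,
            fderiv_congr_of_local C (lieD f φ k) hd ihl x y hxy (Pi.single i 1)]
        · have hzx : fderiv ℝ (lieD f φ k) x (Pi.single i 1) = 0 :=
            fderiv_zero_of_local C (lieD f φ k) hd ihl x _
              (fun l hl => Pi.single_eq_of_ne (by rintro rfl; exact hi hl) 1)
          have hzy : fderiv ℝ (lieD f φ k) y (Pi.single i 1) = 0 :=
            fderiv_zero_of_local C (lieD f φ k) hd ihl y _
              (fun l hl => Pi.single_eq_of_ne (by rintro rfl; exact hi hl) 1)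
          rw [hzx, hzy, smul_zero, smul_zero]
  -- First conclusion
  have part1 : ∀ k : ℕ,
      lieD (fun x i => (∑ j, A x i j * e j (x j)) + ∑ c, G x i c * κ x c) φ k =
        lieD f φ k := by
    intro k
    induction k with
    | zero => rfl
    | succ k ih =>
      funext x
      show fderiv ℝ
        (lieD (fun x i => (∑ j, A x i j * e j (x j)) + ∑ c, G x i c * κ x c) φ k) x
          (fun i => (∑ j, A x i j * e j (x j)) + ∑ c, G x i c * κ x c)
        = fderiv ℝ (lieD f φ k) x (f x)
      rw [ih]
      have hsplit : (fun i => (∑ j, A x i j * e j (x j)) + ∑ c, G x i c * κ x c)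
          = f x + fun i => ∑ c, G x i c * κ x c := rfl
      rw [hsplit, map_add]
      have hz : fderiv ℝ (lieD f φ k) x (fun i => ∑ c, G x i c * κ x c) = 0 :=
        fderiv_zero_of_local C (lieD f φ k) ((main k).1.differentiable (by simp))
          (main k).2 x _ (fun i hi => Finset.sum_eq_zero fun c _ => by
            rw [hGzero i hi x c, zero_mul])
      rw [hz, add_zero]
  refine ⟨part1, ?_⟩
  intro k x c
  rw [part1 k]
  exact fderiv_zero_of_local C (lieD f φ k) ((main k).1.differentiable (by simp))
    (main k).2 x _ (fun i hi => hGzero i hi x c)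
end

section
/- Feasibility under bounded inputs: let K ⊆ ℝ^n be compact, Z ⊆ K closed, a, b : K → ℝ continuous with b ≥ 0, Z = {x ∈ K : b(x) = 0}, and suppose (i) there is an open neighborhood U of Z in K with a(x) ≥ 0 on U, and (ii) max(−a(x),0) ≤ M + c₁ b(x) and there is σ > 0 with the 'authority' β(x) ≥ σ b(x) for all x ∈ K, where β : K → ℝ is continuous nonnegative with {β = 0} ⊆ Z. Then sup_{x ∈ K \ Z} max(−a(x),0)/β(x) < ∞. -/
/-! The numerator `max (-a) 0` vanishes on `U = V ∩ K`. Off the open set `V`, `β` has no zeros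
(they lie in `Z ⊆ V`), so the ratio is continuous on the compact set `K \ V` and hence bounded. -/

theorem stmt13_general {n : ℕ} (K : Set (EuclideanSpace ℝ (Fin n))) (hK : IsCompact K)
    (a β : EuclideanSpace ℝ (Fin n) → ℝ)
    (ha : ContinuousOn a K) (hβcont : ContinuousOn β K)
    (Z : Set (EuclideanSpace ℝ (Fin n)))
    (U V : Set (EuclideanSpace ℝ (Fin n))) (hV : IsOpen V) (hU : U = V ∩ K)
    (hZU : Z ⊆ U)
    (haU : ∀ x ∈ U, 0 ≤ a x)
    (hβZ : {x ∈ K | β x = 0} ⊆ Z) :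
    ∃ C : ℝ, ∀ x ∈ K \ Z, max (-(a x)) 0 / β x ≤ C := by
  subst hU
  have hβ_ne : ∀ x ∈ K \ V, β x ≠ 0 := fun x hx hβx => hx.2 (hZU (hβZ ⟨hx.1, hβx⟩)).1
  have hratio : ContinuousOn (fun x => max (-(a x)) 0 / β x) (K \ V) :=
    (((ha.mono Set.sdiff_subset).neg).sup continuousOn_const).div
      (hβcont.mono Set.sdiff_subset) hβ_ne
  obtain ⟨C, hC⟩ := (hK.diff hV).bddAbove_image hratio
  refine ⟨max C 0, fun x hx => ?_⟩
  by_cases hxV : x ∈ V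
  · have hnum : max (-(a x)) 0 = 0 := max_eq_right (neg_nonpos.2 (haU x ⟨hxV, hx.1⟩))
    rw [hnum, zero_div]
    exact le_max_right C 0
  · exact le_max_of_le_left (hC ⟨x, ⟨hx.1, hxV⟩, rfl⟩)

theorem stmt13 {n : ℕ} (K : Set (EuclideanSpace ℝ (Fin n))) (hK : IsCompact K)
    (a b β : EuclideanSpace ℝ (Fin n) → ℝ)
    (ha : ContinuousOn a K) (hb : ContinuousOn b K) (hβcont : ContinuousOn β K)
    (hbnn : ∀ x ∈ K, 0 ≤ b x) (hβnn : ∀ x ∈ K, 0 ≤ β x)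
    (Z : Set (EuclideanSpace ℝ (Fin n))) (hZ : Z = {x ∈ K | b x = 0})
    (U V : Set (EuclideanSpace ℝ (Fin n))) (hV : IsOpen V) (hU : U = V ∩ K)
    (hZU : Z ⊆ U)
    (haU : ∀ x ∈ U, 0 ≤ a x)
    (M c₁ : ℝ) (henv : ∀ x ∈ K, max (-(a x)) 0 ≤ M + c₁ * b x)
    (σ : ℝ) (hσ : 0 < σ) (hcoerc : ∀ x ∈ K, σ * b x ≤ β x)
    (hβZ : {x ∈ K | β x = 0} ⊆ Z) :
    ∃ C : ℝ, ∀ x ∈ K \ Z, max (-(a x)) 0 / β x ≤ C :=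
  stmt13_general K hK a β ha hβcont Z U V hV hU hZU haU hβZ
end
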